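/- arXiv:1811.03503 — 2 statements merged into one kernel-verified Lean document; each statement's English description precedes it below -/
import Mathlib

section
/- (Update at the tip of an acyclic path preserves prefix addresses.) Suppose π is acyclic in (s,h), s(root π) = s'(root π), dom(footprint of π in (s,h)) ⊆ dom(h'), and h(α) = h'(α) for all α in the footprint domain of π except possibly the address of π itself. Then for every prefix π' ≼ π, the address of π' is the same in (s,h) and (s',h'), and the footprint domains of π in (s,h) and (s',h') coincide. -/
/-- Variables. -/
abbrev Var := ℕ
/-- Fld names. -/
abbrev Fld := ℕ
/-- Object locations. -/
abbrev Loc := ℕ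
/-- Addresses in the field-splitting style. -/
abbrev Addr := Loc × Fld
/-- Stacks (stores). -/
abbrev Stack := Var → Loc
/-- Partial heaps. -/
abbrev Heap := Addr → Option Loc

/-- Follow a list of fields starting from a given address. -/
def lvalAux (h : Heap) : Addr → List Fld → Option Addr
  | a, [] => some a
  | a, f :: fs => (h a).bind fun ℓ => lvalAux h (ℓ, f) fs

/-- The address `⟨x.fs⟩_{s,h}` of the access path `x.fs`
    (`none` if undefined, and paths must have a nonempty field list). -/
def lval (s : Stack) (h : Heap) (x : Var) : List Fld → Option Addr
  | [] => none
  | f :: fs => lvalAux h (s x, f) fs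

/-- Domain of a partial map. -/
def pdom {β : Type} (m : Addr → Option β) : Set Addr := {a | (m a).isSome}

/-- Domain of a heap. -/
def hdom (h : Heap) : Set Addr := {a | (h a).isSome}

/-- The locations underlying a set of addresses. -/
def locs (A : Set Addr) : Set Loc := Prod.fst '' A

/-- The set of addresses of all (nonempty) prefixes of the path `x.fs`:
    the domain of its footprint. -/
def footDom (s : Stack) (h : Heap) (x : Var) (fs : List Fld) : Set Addr :=
  {a | ∃ gs : List Fld, gs ≠ [] ∧ gs <+: fs ∧ lval s h x gs = some a}

open Classical in
/-- The footprint `h⟨s, x.fs⟩` of the path `x.fs`: the partial map defined exactly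
    on the addresses of prefixes of the path, mapping `⟨π'⟩` to `h ⟨π'⟩`. -/
noncomputable def footprint (s : Stack) (h : Heap) (x : Var) (fs : List Fld) :
    Addr → Option (Option Loc) :=
  fun a => if a ∈ footDom s h x fs then some (h a) else none

/-- Acyclicity of the path `x.fs` in state `(s, h)`. -/
def Acyclic (s : Stack) (h : Heap) (x : Var) (fs : List Fld) : Prop :=
  (lval s h x fs).isSome ∧
  ∀ (gs' gs : List Fld) (a a' : Addr), gs' ≠ [] → gs' <+: gs → gs <+: fs →
    lval s h x gs = some a → lval s h x gs' = some a' → h a ≠ some a'.1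

/-- Disconnectedness of the path `x.fs` in state `(s, h)`. -/
def Disconnected (s : Stack) (h : Heap) (x : Var) (fs : List Fld) : Prop :=
  (lval s h x fs).isSome ∧
  (∀ y, y ≠ x → s y ∉ locs (footDom s h x fs)) ∧
  (∀ a ℓ, h a = some ℓ → ℓ ∈ locs (footDom s h x fs) → a ∈ footDom s h x fs)

/-- The path `x.fs` is preserved from `(s, h)` to `(s', h')`. -/
def Preserved (x : Var) (fs : List Fld) (s : Stack) (h : Heap)
    (s' : Stack) (h' : Heap) : Prop :=
  Disconnected s h x fs ∧ Acyclic s h x fs ∧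
  Disconnected s' h' x fs ∧ Acyclic s' h' x fs ∧
  s x = s' x ∧
  footDom s h x fs = footDom s' h' x fs ∧
  (∀ a ∈ footDom s h x fs, lval s h x fs ≠ some a → h a = h' a)

/-- Well-behavedness of a state. -/
def WellBehaved (s : Stack) (h : Heap) : Prop :=
  (∀ y, s y ∈ locs (hdom h)) ∧ (∀ a ℓ, h a = some ℓ → ℓ ∈ locs (hdom h))

lemma lvalAux_snoc (h : Heap) (a : Addr) (gs : List Fld) (f : Fld) :
    lvalAux h a (gs ++ [f]) = (lvalAux h a gs).bind fun a' => (h a').map fun ℓ => (ℓ, f) := by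
  induction gs generalizing a with
  | nil => simp [lvalAux, Option.map_eq_bind]
  | cons g gs ih =>
    simp only [List.cons_append, lvalAux]
    cases h a with
    | none => rfl
    | some ℓ => simp [ih]

lemma lval_snoc (s : Stack) (h : Heap) (x : Var) (gs : List Fld) (hgs : gs ≠ []) (f : Fld) :
    lval s h x (gs ++ [f]) = (lval s h x gs).bind fun a => (h a).map fun ℓ => (ℓ, f) := by
  cases gs with
  | nil => exact absurd rfl hgs
  | cons g gs => simp [lval, lvalAux_snoc]

lemma addr_ne_of_proper_prefix (s : Stack) (h : Heap) (x : Var) (fs : List Fld)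
    (hac : Acyclic s h x fs) (gs : List Fld) (hgs : gs ≠ []) (hpre : gs <+: fs)
    (hlen : gs.length < fs.length) (a : Addr)
    (hg : lval s h x gs = some a) (hf : lval s h x fs = some a) : False := by
  have hfs : fs ≠ [] := by rintro rfl; simp at hlen
  set ds := fs.dropLast with hds
  have hsplit : ds ++ [fs.getLast hfs] = fs := List.dropLast_append_getLast hfs
  have hdsne : ds ≠ [] := by
    have : 1 ≤ gs.length := List.length_pos_iff.mpr hgs
    have : 2 ≤ fs.length := by omega
    intro hnil
    have := congrArg List.length hsplit
    simp [hnil] at this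
    omega
  have hdspre : ds <+: fs := hsplit ▸ List.prefix_append ds _
  have hgspre : gs <+: ds := by
    apply List.prefix_of_prefix_length_le hpre hdspre
    have := congrArg List.length hsplit
    simp at this
    omega
  rw [← hsplit, lval_snoc s h x ds hdsne] at hf
  rcases hb : lval s h x ds with _ | b
  · rw [hb] at hf; exact absurd hf (by simp)
  · rw [hb] at hf
    simp only [Option.bind_some] at hf
    rcases hℓ : h b with _ | ℓ
    · rw [hℓ] at hf; exact absurd hf (by simp)
    · rw [hℓ] at hf
      rw [Option.map_some] at hf
      have : h b = some a.1 := by rw [hℓ]; cases hf; rfl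
      exact hac.2 gs ds b a hgs hgspre hdspre hb hg this

/-- (Update at the tip of an acyclic path preserves prefix addresses.)
If `π = x.fs` is acyclic in `(s,h)`, the root values agree, the footprint domain of `π`
in `(s,h)` is contained in `dom h'`, and `h` and `h'` agree on the footprint domain
except possibly at the address of `π` itself, then every prefix of `π` has the same
address in both states, and the footprint domains coincide. -/
theorem tip_update_preserves_prefixes (s s' : Stack) (h h' : Heap) (x : Var)
    (fs : List Fld) (hfs : fs ≠ [])
    (hac : Acyclic s h x fs)
    (hroot : s x = s' x)
    (hsub : footDom s h x fs ⊆ hdom h')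
    (hagree : ∀ a ∈ footDom s h x fs, lval s h x fs ≠ some a → h a = h' a) :
    (∀ gs : List Fld, gs ≠ [] → gs <+: fs → lval s h x gs = lval s' h' x gs) ∧
    footDom s h x fs = footDom s' h' x fs := by
  have hagree' : ∀ (a : Addr) (gs : List Fld), gs ≠ [] → gs <+: fs → gs.length < fs.length →
      lval s h x gs = some a → h a = h' a := by
    intro a gs hgs hpre hlen hg
    apply hagree a ⟨gs, hgs, hpre, hg⟩
    intro hf
    exact addr_ne_of_proper_prefix s h x fs hac gs hgs hpre hlen a hg hf
  have main : ∀ gs : List Fld, gs ≠ [] → gs <+: fs → lval s h x gs = lval s' h' x gs := by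
    intro gs
    induction gs using List.reverseRecOn with
    | nil => intro hgs; exact absurd rfl hgs
    | append_singleton as f ih =>
      intro _ hpre
      rcases eq_or_ne as [] with hnil | hne
      · subst hnil; simp [lval, lvalAux, hroot]
      ·
        have haspre : as <+: fs := ((List.prefix_append as [f]).trans hpre)
        have ihv := ih hne haspre
        rw [lval_snoc s h x as hne f, lval_snoc s' h' x as hne f, ← ihv]
        rcases ha : lval s h x as with _ | a
        · rfl
        · simp only [Option.bind_some]
          have hlen : as.length < fs.length := by
            have h1 := List.IsPrefix.length_le hpre
            simp at h1; omega
          rw [hagree' a as hne haspre hlen ha]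
  refine ⟨main, ?_⟩
  ext a
  constructor
  · rintro ⟨gs, hgs, hpre, hg⟩
    exact ⟨gs, hgs, hpre, (main gs hgs hpre) ▸ hg⟩
  · rintro ⟨gs, hgs, hpre, hg⟩
    exact ⟨gs, hgs, hpre, (main gs hgs hpre) ▸ hg⟩
end

section
/- (Other-thread address invariance.) Let π₁ = x.fs and π₂ = y.fs with s₁(x) = s₂(y). Let h, h' be heaps with dom(h) ⊆ dom(h') and h(α) = h'(α) for every α in the footprint domain of π₁ in (s₁,h), except possibly the address of π₁ itself. If π₁ is acyclic in (s₁, h), then the address of π₂ in (s₂, h) equals the address of π₂ in (s₂, h'). -/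
theorem lvalAux_append (h : Heap) (l₁ l₂ : List Fld) :
    ∀ a, lvalAux h a (l₁ ++ l₂) = (lvalAux h a l₁).bind fun b => lvalAux h b l₂ := by
  induction l₁ with
  | nil => intro a; simp [lvalAux]
  | cons f t ih =>
    intro a
    simp only [List.cons_append, lvalAux]
    cases h a with
    | none => simp
    | some ℓ => simp [ih]

theorem lvalAux_stable (h h' : Heap) :
    ∀ (fs : List Fld) (a : Addr),
      (∀ gs b, gs <+: fs → gs ≠ fs → lvalAux h a gs = some b → h b = h' b) →
      ∀ c, lvalAux h a fs = some c → lvalAux h' a fs = some c := by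
  intro fs
  induction fs with
  | nil => intro a _ c hc; simpa [lvalAux] using hc
  | cons f rest ih =>
    intro a H c hc
    have ha : h a = h' a := by
      refine H [] a ⟨f :: rest, rfl⟩ (by simp) rfl
    simp only [lvalAux] at hc ⊢
    cases hha : h a with
    | none => rw [hha] at hc; simp at hc
    | some ℓ =>
      rw [hha] at hc
      simp only [Option.bind_some] at hc
      rw [← ha, hha]
      simp only [Option.bind_some]
      refine ih (ℓ, f) ?_ c hc
      intro gs b hpre hne hgb
      refine H (f :: gs) b ?_ (by simpa using hne) ?_
      · obtain ⟨t, ht⟩ := hpre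
        exact ⟨t, by simp [← ht]⟩
      · simp only [lvalAux, hha, Option.bind_some]
        exact hgb

/-- (Other-thread address invariance.) Let `π₁ = x.fs` and `π₂ = y.fs`
with `s₁ x = s₂ y`. Let `h, h'` be heaps with `dom h ⊆ dom h'` agreeing on the footprint
domain of `π₁` in `(s₁,h)` except possibly at the address of `π₁` itself. If `π₁` is
acyclic in `(s₁, h)`, then the address of `π₂` in `(s₂, h)` equals that in `(s₂, h')`. -/
theorem other_thread_address_invariance (s₁ s₂ : Stack) (h h' : Heap) (x y : Var)
    (fs : List Fld) (hroot : s₁ x = s₂ y)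
    (hsub : hdom h ⊆ hdom h')
    (hagree : ∀ a ∈ footDom s₁ h x fs, lval s₁ h x fs ≠ some a → h a = h' a)
    (hac : Acyclic s₁ h x fs) :
    lval s₂ h y fs = lval s₂ h' y fs := by
  cases fs with
  | nil => simp [lval]
  | cons f rest =>
    show lvalAux h (s₂ y, f) rest = lvalAux h' (s₂ y, f) rest
    rw [← hroot]
    obtain ⟨c, hc⟩ := Option.isSome_iff_exists.mp hac.1
    have hc' : lvalAux h (s₁ x, f) rest = some c := hc
    have key : lvalAux h' (s₁ x, f) rest = some c := by
      refine lvalAux_stable h h' rest (s₁ x, f) ?_ c hc'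
      intro gs b hpre hne hgb
      have hmem : b ∈ footDom s₁ h x (f :: rest) := by
        refine ⟨f :: gs, by simp, ?_, hgb⟩
        obtain ⟨t, ht⟩ := hpre
        exact ⟨t, by simp [← ht]⟩
      refine hagree b hmem ?_
      intro heq
      -- heq : lval s₁ h x (f :: rest) = some b, with b also addr of proper prefix
      have heq' : lvalAux h (s₁ x, f) rest = some b := heq
      obtain ⟨t, ht⟩ := hpre
      cases t with
      | nil => exact hne (by simp [← ht])
      | cons f' t' =>
        have hsplit : rest = (gs ++ [f']) ++ t' := by simp [← ht]
        have := heq'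
        rw [hsplit, lvalAux_append, lvalAux_append, hgb] at this
        simp only [Option.bind_some] at this
        cases hb : h b with
        | none => rw [show lvalAux h b [f'] = none by simp [lvalAux, hb]] at this; simp at this
        | some ℓ =>
          have hstep : lvalAux h b [f'] = some (ℓ, f') := by simp [lvalAux, hb]
          have hgs' : lval s₁ h x (f :: (gs ++ [f'])) = some (ℓ, f') := by
            show lvalAux h (s₁ x, f) (gs ++ [f']) = some (ℓ, f')
            rw [lvalAux_append, hgb]
            simpa using hstep
          exact hac.2 (f :: (gs ++ [f'])) (f :: rest) b (ℓ, f') (by simp)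
            ⟨t', by simp [hsplit]⟩ List.prefix_rfl heq hgs' hb
    rw [hc', key]
end
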